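/- Suppose the two balls of the bouncing-ball system have equal positive masses (so that at a ball–ball collision they exchange velocities) and that f belongs to the class 𝒞. Then there exists a motion of the system such that limsup_{i→∞} |v⁽¹⁾ᵢ| = limsup_{i→∞} |v⁽²⁾ᵢ| = ∞ while max(liminf_{i→∞} |v⁽¹⁾ᵢ|, liminf_{i→∞} |v⁽²⁾ᵢ|) < ∞, where v⁽²⁾ᵢ denotes the velocity of the lower ball P₂ just after its i-th collision with the plate and v⁽¹⁾ᵢ denotes the velocity of the upper ball P₁ just after its i-th collision with P₂. -/

import Mathlib

/-!
Balls of equal mass exchange velocities when they collide, so two independent balls ("ghosts")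
bouncing on the plate, relabelled by height whenever they meet, form a motion of the two-ball
system. One ghost bounces at times `≡ t₀ (mod T)`, where `f' = K T g / 2`, with flights lasting an
even number of periods: the reflection law then adds `K T g` to its speed at every bounce. The
other bounces with constant speed at a critical point `u₀ ∈ (t₀, t₀ + T)` of `f`. Speeds above
twice the Lipschitz constant of `f` keep each ghost above the plate between its bounces, and as
`u₀ ≢ t₀ (mod T)` the ghosts never bounce or peak together, so they cross transversally at each
meeting. Once the apex of the fast ghost is out of reach of the slow one, the fast ghost crosses
it twice per flight: on its way up it leaves as the fast upper ball, on its way down the upper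
ball is slow. The bounces of the two ghosts give unbounded and bounded plate velocities.
-/

open Filter Topology

/-- A motion of the one-dimensional system of two bouncing balls `P₁` (upper,
mass `m₁`) and `P₂` (lower, mass `m₂`) above a plate oscillating with height
`f(t)`, in constant gravity `g`.  `x₁, x₂` are the positions, `v₁, v₂` the
velocities, and `coll` the (discrete) set of collision times.  Between
collisions the balls are in free fall; at a plate collision `P₂` reflects by
`v₂⁺ = −v₂⁻ + 2 f'(t)`; at a ball–ball collision the elastic collision law
with `α = (m₁−m₂)/(m₁+m₂)` holds; triple collisions are excluded. -/
structure BouncingBallMotion (g : ℝ) (f : ℝ → ℝ) (m₁ m₂ : ℝ) where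
  x₁ : ℝ → ℝ
  x₂ : ℝ → ℝ
  v₁ : ℝ → ℝ
  v₂ : ℝ → ℝ
  coll : Set ℝ
  cont₁ : ContinuousOn x₁ (Set.Ici 0)
  cont₂ : ContinuousOn x₂ (Set.Ici 0)
  order : ∀ t ∈ Set.Ici (0 : ℝ), f t ≤ x₂ t ∧ x₂ t ≤ x₁ t
  coll_sub : coll ⊆ Set.Ici 0
  coll_discrete : ∀ t : ℝ, ∃ ε > (0 : ℝ), ∀ s ∈ coll, |s - t| < ε → s = t
  freefall₁ : ∀ t ∈ Set.Ici (0 : ℝ) \ coll,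
    HasDerivAt x₁ (v₁ t) t ∧ HasDerivAt v₁ (-g) t
  freefall₂ : ∀ t ∈ Set.Ici (0 : ℝ) \ coll,
    HasDerivAt x₂ (v₂ t) t ∧ HasDerivAt v₂ (-g) t
  contact_mem_coll : ∀ t ∈ Set.Ici (0 : ℝ), x₂ t = f t ∨ x₁ t = x₂ t → t ∈ coll
  coll_is_contact : ∀ t ∈ coll, x₂ t = f t ∨ x₁ t = x₂ t
  no_triple : ∀ t ∈ coll, ¬(x₂ t = f t ∧ x₁ t = x₂ t)
  plate_law : ∀ t ∈ coll, 0 < t → x₂ t = f t →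
    (∃ a b : ℝ, Tendsto v₂ (𝓝[<] t) (𝓝 a) ∧ Tendsto v₂ (𝓝[>] t) (𝓝 b) ∧
      b = -a + 2 * deriv f t) ∧
    (∃ a : ℝ, Tendsto v₁ (𝓝[<] t) (𝓝 a) ∧ Tendsto v₁ (𝓝[>] t) (𝓝 a))
  ball_law : ∀ t ∈ coll, 0 < t → x₁ t = x₂ t →
    ∃ a₁ a₂ b₁ b₂ : ℝ,
      Tendsto v₁ (𝓝[<] t) (𝓝 a₁) ∧ Tendsto v₂ (𝓝[<] t) (𝓝 a₂) ∧
      Tendsto v₁ (𝓝[>] t) (𝓝 b₁) ∧ Tendsto v₂ (𝓝[>] t) (𝓝 b₂) ∧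
      b₁ = (m₁ - m₂) / (m₁ + m₂) * a₁ + (1 - (m₁ - m₂) / (m₁ + m₂)) * a₂ ∧
      b₂ = (1 + (m₁ - m₂) / (m₁ + m₂)) * a₁ - (m₁ - m₂) / (m₁ + m₂) * a₂

open Set NNReal

noncomputable section

theorem max_eq_min_iff {α : Type*} [LinearOrder α] {a b : α} : max a b = min a b ↔ a = b := by
  rcases le_total a b with h | h <;> simp [h, le_antisymm_iff]

theorem abs_max_le_abs_of_neg {a b : ℝ} (ha : a < 0) : |max a b| ≤ |b| :=
  abs_le.2 ⟨(neg_abs_le b).trans (le_max_right a b),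
    max_le (ha.le.trans (abs_nonneg b)) (le_abs_self b)⟩

theorem Function.Periodic.deriv {f : ℝ → ℝ} {T : ℝ} (hf : Function.Periodic f T) :
    Function.Periodic (deriv f) T := fun x => by
  rw [← deriv_comp_add_const, show (fun y => f (y + T)) = f from funext hf]

theorem Function.Periodic.exists_lipschitzWith {f : ℝ → ℝ} {T : ℝ} (hf : ContDiff ℝ 1 f)
    (hper : Function.Periodic f T) (hT : T ≠ 0) : ∃ L : ℝ≥0, LipschitzWith L f := by
  obtain ⟨C, hC⟩ := ((hper.deriv.compact_of_continuous hT (hf.continuous_deriv le_rfl)).isBounded)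
    |>.exists_norm_le
  refine ⟨C.toNNReal, lipschitzWith_of_nnnorm_deriv_le (hf.differentiable one_ne_zero) fun x => ?_⟩
  rw [← NNReal.coe_le_coe, coe_nnnorm]
  exact (hC _ (mem_range_self x)).trans (Real.le_coe_toNNReal C)

theorem exists_pos_forall_abs_sub_lt_imp_eq {S : Set ℝ} (hS : ∀ x, (S ∩ Iic x).Finite) (t : ℝ) :
    ∃ ε > 0, ∀ s ∈ S, |s - t| < ε → s = t := by
  have hclosed : IsClosed ((S ∩ Iic (t + 1)) \ {t}) := ((hS _).sdiff).isClosed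
  obtain ⟨ε, hε, hball⟩ := Metric.isOpen_iff.1 hclosed.isOpen_compl t (by simp)
  refine ⟨min ε 1, by positivity, fun s hs hst => by_contra fun hne => ?_⟩
  have hst' : |s - t| < ε ∧ |s - t| < 1 := lt_min_iff.1 hst
  refine hball (by rw [Metric.mem_ball, Real.dist_eq]; exact hst'.1) ⟨⟨hs, ?_⟩, hne⟩
  exact mem_Iic.2 (by linarith [(abs_lt.1 hst'.2).2])

/-- `S` is a locally finite linear order with a least element and no greatest one, hence
order-isomorphic to `ℕ`. -/
theorem exists_strictMono_range_eq {α : Type*} [LinearOrder α] [Nonempty α] {S : Set α}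
    (hS : ∀ x, (S ∩ Iic x).Finite) (hunb : ¬BddAbove S) :
    ∃ σ : ℕ → α, StrictMono σ ∧ range σ = S := by
  have hIcc (a b : S) : (Icc a b).Finite :=
    ((hS b).preimage Subtype.val_injective.injOn).subset fun x hx => ⟨x.2, hx.2⟩
  let _ : LocallyFiniteOrder S := .ofFiniteIcc hIcc
  let _ : SuccOrder S := LinearLocallyFiniteOrder.succOrder S
  let _ : PredOrder S := LinearLocallyFiniteOrder.predOrder S
  obtain ⟨x₀, hx₀⟩ := nonempty_of_not_bddAbove hunb
  obtain ⟨b, hb⟩ := (hS x₀).exists_minimal ⟨x₀, hx₀, mem_Iic.2 le_rfl⟩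
  have hb_le (x : S) : b ≤ x := by
    rcases le_total (x : α) x₀ with h | h
    · exact le_of_not_gt fun hlt => hlt.not_ge (hb.2 ⟨x.2, h⟩ hlt.le)
    · exact hb.1.2.trans h
  let _ : OrderBot S := { bot := ⟨b, hb.1.1⟩, bot_le := hb_le }
  have _ : NoMaxOrder S := ⟨fun x => by
    obtain ⟨y, hy, hxy⟩ := not_bddAbove_iff.mp hunb x
    exact ⟨⟨y, hy⟩, hxy⟩⟩
  let e := (orderIsoNatOfLinearSuccPredArch (ι := S)).symm
  refine ⟨fun n => e n, (Subtype.strictMono_coe _).comp e.strictMono, ?_⟩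
  ext x
  exact ⟨by rintro ⟨n, rfl⟩; exact (e n).2, fun hx => ⟨e.symm ⟨x, hx⟩, by simp⟩⟩

theorem StrictMono.frequently_atTop {α : Type*} [Preorder α] {σ : ℕ → α} (hσ : StrictMono σ)
    {p : α → Prop} (h : ∀ x, ∃ t ∈ range σ, x < t ∧ p t) : ∃ᶠ i in atTop, p (σ i) :=
  Filter.frequently_atTop.2 fun N => by
    obtain ⟨_, ⟨i, rfl⟩, hi, hp⟩ := h (σ N)
    exact ⟨i, (hσ.lt_iff_lt.1 hi).le, hp⟩

/-- A ball bouncing on the plate `f`: it takes off at time `s j` with speed `ν j`, and the plate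
has height `h` at every bounce. Speeds of at least `c > 2L` keep it above the `L`-Lipschitz plate
between bounces. -/
structure Bouncer (g : ℝ) (f : ℝ → ℝ) where
  s : ℕ → ℝ
  ν : ℕ → ℝ
  h : ℝ
  L : ℝ≥0
  c : ℝ
  g_pos : 0 < g
  lipschitz : LipschitzWith L f
  plate_eq : ∀ j, f (s j) = h
  s_succ : ∀ j, s (j + 1) = s j + 2 * ν j / g
  two_mul_L_lt : 2 * (L : ℝ) < c
  c_le_ν : ∀ j, c ≤ ν j
  ν_succ : ∀ j, ν (j + 1) = ν j + 2 * deriv f (s (j + 1))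

namespace Bouncer

variable {g : ℝ} {f : ℝ → ℝ} (B : Bouncer g f)

def arc (j : ℕ) (t : ℝ) : ℝ := B.h + B.ν j * (t - B.s j) - g / 2 * (t - B.s j) ^ 2

def arcVel (j : ℕ) (t : ℝ) : ℝ := B.ν j - g * (t - B.s j)

def apex (j : ℕ) : ℝ := B.s j + B.ν j / g

/-- The flight containing `t`; before the first bounce this is `0`, as `sSup ∅ = 0`. -/
def flight (t : ℝ) : ℕ := sSup {j | B.s j ≤ t}

def pos (t : ℝ) : ℝ := B.arc (B.flight t) t

def vel (t : ℝ) : ℝ := B.arcVel (B.flight t) t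

theorem c_pos : 0 < B.c := by linarith [B.two_mul_L_lt, B.L.2]

theorem ν_pos (j : ℕ) : 0 < B.ν j := B.c_pos.trans_le (B.c_le_ν j)

theorem s_lt_apex (j : ℕ) : B.s j < B.apex j := by
  have := div_pos (B.ν_pos j) B.g_pos
  rw [apex]; linarith

theorem apex_lt_s_succ (j : ℕ) : B.apex j < B.s (j + 1) := by
  have := div_pos (B.ν_pos j) B.g_pos
  rw [apex, B.s_succ, mul_div_assoc]; linarith

theorem s_lt_s_succ (j : ℕ) : B.s j < B.s (j + 1) := (B.s_lt_apex j).trans (B.apex_lt_s_succ j)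

theorem strictMono_s : StrictMono B.s := strictMono_nat_of_lt_succ B.s_lt_s_succ

theorem s_zero_add_le (j : ℕ) : B.s 0 + j * (2 * B.c / g) ≤ B.s j := by
  induction j with
  | zero => simp
  | succ j ih =>
    have := div_le_div_of_nonneg_right (mul_le_mul_of_nonneg_left (B.c_le_ν j) zero_le_two)
      B.g_pos.le
    rw [B.s_succ]; push_cast; linarith

theorem tendsto_s : Tendsto B.s atTop atTop :=
  tendsto_atTop_mono B.s_zero_add_le <| tendsto_atTop_add_const_left _ _ <|
    tendsto_natCast_atTop_atTop.atTop_mul_const (by have := B.c_pos; have := B.g_pos; positivity)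

theorem finite_setOf_s_le (x : ℝ) : {j | B.s j ≤ x}.Finite := by
  obtain ⟨N, hN⟩ := eventually_atTop.1 (B.tendsto_s.eventually_gt_atTop x)
  exact (finite_lt_nat N).subset fun j hj => not_le.1 fun hNj => (hN j hNj).not_ge hj

theorem flight_spec {t : ℝ} (ht : B.s 0 ≤ t) :
    B.s (B.flight t) ≤ t ∧ t < B.s (B.flight t + 1) := by
  have hbdd := (B.finite_setOf_s_le t).bddAbove
  refine ⟨Nat.sSup_mem ⟨0, ht⟩ hbdd, not_le.1 fun h => ?_⟩
  exact (Nat.lt_succ_self _).not_ge (le_csSup hbdd h)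

theorem flight_eq {t : ℝ} {j : ℕ} (h₁ : B.s j ≤ t) (h₂ : t < B.s (j + 1)) : B.flight t = j := by
  have hj : j ≤ B.flight t := le_csSup (B.finite_setOf_s_le t).bddAbove h₁
  refine le_antisymm (Nat.lt_succ_iff.1 ?_) hj
  exact B.strictMono_s.lt_iff_lt.1 (h₂.trans_le' (B.flight_spec
    ((B.strictMono_s.monotone j.zero_le).trans h₁)).1)

theorem flight_of_lt {t : ℝ} (ht : t < B.s 0) : B.flight t = 0 := by
  have : {j | B.s j ≤ t} = ∅ := eq_empty_of_forall_notMem fun j hj =>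
    (ht.trans_le (B.strictMono_s.monotone j.zero_le)).not_ge hj
  rw [flight, this, csSup_empty, Nat.bot_eq_zero]

theorem arc_eq (j : ℕ) (t : ℝ) :
    B.arc j t = B.h + B.ν j ^ 2 / (2 * g) - g / 2 * (t - B.apex j) ^ 2 := by
  have := B.g_pos.ne'
  rw [arc, apex]; field_simp; ring

theorem arcVel_eq (j : ℕ) (t : ℝ) : B.arcVel j t = g * (B.apex j - t) := by
  have := B.g_pos.ne'
  rw [arcVel, apex]; field_simp; ring

theorem arcVel_sq (j : ℕ) (t : ℝ) : B.arcVel j t ^ 2 = B.ν j ^ 2 - 2 * g * (B.arc j t - B.h) := by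
  rw [arcVel, arc]; ring

theorem arc_s (j : ℕ) : B.arc j (B.s j) = B.h := by simp [arc]

theorem arcVel_s (j : ℕ) : B.arcVel j (B.s j) = B.ν j := by simp [arcVel]

theorem arc_s_succ (j : ℕ) : B.arc j (B.s (j + 1)) = B.h := by
  have := B.g_pos.ne'
  rw [arc, B.s_succ]; field_simp; ring

theorem arcVel_s_succ (j : ℕ) : B.arcVel j (B.s (j + 1)) = -B.ν j := by
  have := B.g_pos.ne'
  rw [arcVel, B.s_succ]; field_simp; ring

theorem arc_sub_arc (B' : Bouncer g f) (j l : ℕ) (t u : ℝ) :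
    (B.arc j u - B'.arc l u) - (B.arc j t - B'.arc l t) = g * (B.apex j - B'.apex l) * (u - t) := by
  rw [B.arc_eq, B.arc_eq, B'.arc_eq, B'.arc_eq]; ring

theorem hasDerivAt_arc (j : ℕ) (t : ℝ) : HasDerivAt (B.arc j) (B.arcVel j t) t := by
  have h := (hasDerivAt_id' t).sub_const (B.s j)
  have := ((h.const_mul (B.ν j)).const_add B.h).sub ((h.pow 2).const_mul (g / 2))
  exact this.congr_deriv (by simp [arcVel]; ring)

theorem hasDerivAt_arcVel (j : ℕ) (t : ℝ) : HasDerivAt (B.arcVel j) (-g) t := by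
  have := (((hasDerivAt_id' t).sub_const (B.s j)).const_mul g).const_sub (B.ν j)
  exact this.congr_deriv (by ring)

theorem continuous_arc (j : ℕ) : Continuous (B.arc j) := by unfold arc; fun_prop

theorem continuous_arcVel (j : ℕ) : Continuous (B.arcVel j) := by unfold arcVel; fun_prop

theorem pos_eq_arc {t : ℝ} {j : ℕ} (h₁ : B.s j ≤ t) (h₂ : t ≤ B.s (j + 1)) :
    B.pos t = B.arc j t := by
  rcases h₂.lt_or_eq with h₂ | rfl
  · rw [pos, B.flight_eq h₁ h₂]
  · rw [pos, B.flight_eq le_rfl (B.s_lt_s_succ _), B.arc_s, B.arc_s_succ]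

theorem pos_eq_arc_zero {t : ℝ} (ht : t ≤ B.s 1) : B.pos t = B.arc 0 t := by
  rcases lt_or_ge t (B.s 0) with h | h
  · rw [pos, B.flight_of_lt h]
  · exact B.pos_eq_arc h ht

theorem vel_eq_arcVel {t : ℝ} {j : ℕ} (h₁ : B.s j ≤ t) (h₂ : t < B.s (j + 1)) :
    B.vel t = B.arcVel j t := by
  rw [vel, B.flight_eq h₁ h₂]

theorem pos_s (j : ℕ) : B.pos (B.s j) = f (B.s j) := by
  rw [B.pos_eq_arc le_rfl (B.s_lt_s_succ j).le, B.arc_s, B.plate_eq]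

theorem vel_s (j : ℕ) : B.vel (B.s j) = B.ν j := by
  rw [B.vel_eq_arcVel le_rfl (B.s_lt_s_succ j), arcVel_s]

theorem vel_sq (t : ℝ) : B.vel t ^ 2 = B.ν (B.flight t) ^ 2 - 2 * g * (B.pos t - B.h) :=
  B.arcVel_sq _ t

theorem pos_apex (j : ℕ) : B.pos (B.apex j) = B.h + B.ν j ^ 2 / (2 * g) := by
  rw [B.pos_eq_arc (B.s_lt_apex j).le (B.apex_lt_s_succ j).le, B.arc_eq]; simp

theorem lt_pos_apex {H : ℝ} {j : ℕ} (h : 2 * g * (H - B.h) < B.ν j ^ 2) :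
    H < B.pos (B.apex j) := by
  rw [pos_apex, ← sub_lt_iff_lt_add', lt_div_iff₀' (by linarith [B.g_pos])]
  exact h

theorem pos_le {w : ℝ} (hw : ∀ j, B.ν j ≤ w) (t : ℝ) : B.pos t ≤ B.h + w ^ 2 / (2 * g) := by
  have := B.g_pos
  have hν := pow_le_pow_left₀ (B.ν_pos (B.flight t)).le (hw (B.flight t)) 2
  rw [pos, arc_eq]
  nlinarith [sq_nonneg (t - B.apex (B.flight t)), div_le_div_of_nonneg_right hν (by positivity :
    (0 : ℝ) ≤ 2 * g)]

theorem abs_vel_le {t : ℝ} (ht : B.s 0 ≤ t) : |B.vel t| ≤ B.ν (B.flight t) := by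
  obtain ⟨h₁, h₂⟩ := B.flight_spec ht
  have hs := B.s_succ (B.flight t)
  have hflight : g * (t - B.s (B.flight t)) < 2 * B.ν (B.flight t) :=
    (lt_div_iff₀' B.g_pos).1 (by linarith)
  rw [vel, arcVel, abs_le]
  constructor <;> nlinarith [B.g_pos]

theorem eventuallyEq_nhds {t : ℝ} (ht : ∀ j, t ≠ B.s j) :
    B.pos =ᶠ[𝓝 t] B.arc (B.flight t) ∧ B.vel =ᶠ[𝓝 t] B.arcVel (B.flight t) := by
  rcases lt_or_ge t (B.s 0) with h | h
  · rw [B.flight_of_lt h]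
    have hev : ∀ᶠ u in 𝓝 t, B.flight u = 0 :=
      eventually_of_mem (Iio_mem_nhds h) fun u hu => B.flight_of_lt hu
    exact ⟨hev.mono fun u hu => by rw [pos, hu], hev.mono fun u hu => by rw [vel, hu]⟩
  · obtain ⟨h₁, h₂⟩ := B.flight_spec h
    have hev : ∀ᶠ u in 𝓝 t, B.flight u = B.flight t :=
      eventually_of_mem (Ioo_mem_nhds (h₁.lt_of_ne (ht _).symm) h₂) fun u hu =>
        B.flight_eq hu.1.le hu.2
    exact ⟨hev.mono fun u hu => by rw [pos, hu], hev.mono fun u hu => by rw [vel, hu]⟩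

theorem hasDerivAt_pos {t : ℝ} (ht : ∀ j, t ≠ B.s j) : HasDerivAt B.pos (B.vel t) t :=
  (B.hasDerivAt_arc _ t).congr_of_eventuallyEq (B.eventuallyEq_nhds ht).1

theorem hasDerivAt_vel {t : ℝ} (ht : ∀ j, t ≠ B.s j) : HasDerivAt B.vel (-g) t :=
  (B.hasDerivAt_arcVel _ t).congr_of_eventuallyEq (B.eventuallyEq_nhds ht).2

theorem continuousAt_vel {t : ℝ} (ht : ∀ j, t ≠ B.s j) : ContinuousAt B.vel t :=
  (B.hasDerivAt_vel ht).continuousAt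

theorem exists_eventuallyEq_arc_nhdsLE (t : ℝ) : ∃ j, B.pos =ᶠ[𝓝[≤] t] B.arc j := by
  rcases lt_or_ge t (B.s 1) with h | h
  · exact ⟨0, mem_of_superset self_mem_nhdsWithin fun u hu =>
      B.pos_eq_arc_zero ((mem_Iic.1 hu).trans h.le)⟩
  obtain ⟨h₁, h₂⟩ := B.flight_spec ((B.s_lt_s_succ 0).le.trans h)
  rcases h₁.lt_or_eq with h₁ | h₁
  · exact ⟨_, mem_of_superset (Ioc_mem_nhdsLE h₁) fun u hu =>
      B.pos_eq_arc hu.1.le (hu.2.trans h₂.le)⟩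
  obtain ⟨j, hj⟩ : ∃ j, B.flight t = j + 1 :=
    Nat.exists_eq_add_one.2 (Nat.pos_of_ne_zero fun h0 => by
      rw [h0] at h₁; exact (B.s_lt_s_succ 0).not_ge (h₁ ▸ h))
  rw [hj] at h₁
  exact ⟨j, mem_of_superset (Ioc_mem_nhdsLE (h₁ ▸ B.s_lt_s_succ j)) fun u hu =>
    B.pos_eq_arc hu.1.le (h₁ ▸ hu.2)⟩

theorem exists_eventuallyEq_arc_nhdsGE (t : ℝ) : ∃ j, B.pos =ᶠ[𝓝[≥] t] B.arc j := by
  rcases lt_or_ge t (B.s 0) with h | h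
  · exact ⟨0, mem_of_superset (Ico_mem_nhdsGE (h.trans (B.s_lt_s_succ 0))) fun u hu =>
      B.pos_eq_arc_zero hu.2.le⟩
  obtain ⟨h₁, h₂⟩ := B.flight_spec h
  exact ⟨_, mem_of_superset (Ico_mem_nhdsGE h₂) fun u hu => B.pos_eq_arc (h₁.trans hu.1) hu.2.le⟩

theorem continuous_pos : Continuous B.pos := by
  refine continuous_iff_continuousAt.2 fun t => continuousAt_iff_continuous_left_right.2 ⟨?_, ?_⟩
  · obtain ⟨j, hj⟩ := B.exists_eventuallyEq_arc_nhdsLE t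
    exact (B.continuous_arc j).continuousWithinAt.congr_of_eventuallyEq hj
      (hj.eq_of_nhdsWithin self_mem_Iic)
  · obtain ⟨j, hj⟩ := B.exists_eventuallyEq_arc_nhdsGE t
    exact (B.continuous_arc j).continuousWithinAt.congr_of_eventuallyEq hj
      (hj.eq_of_nhdsWithin self_mem_Ici)

theorem tendsto_vel_nhdsGT (j : ℕ) : Tendsto B.vel (𝓝[>] (B.s j)) (𝓝 (B.ν j)) := by
  have h : Tendsto (B.arcVel j) (𝓝[>] (B.s j)) (𝓝 (B.arcVel j (B.s j))) :=
    (B.continuous_arcVel j).continuousWithinAt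
  rw [arcVel_s] at h
  exact h.congr' (mem_of_superset (Ioo_mem_nhdsGT (B.s_lt_s_succ j)) fun u hu =>
    (B.vel_eq_arcVel hu.1.le hu.2).symm)

theorem tendsto_vel_nhdsLT (j : ℕ) : Tendsto B.vel (𝓝[<] (B.s (j + 1))) (𝓝 (-B.ν j)) := by
  have h : Tendsto (B.arcVel j) (𝓝[<] (B.s (j + 1))) (𝓝 (B.arcVel j (B.s (j + 1)))) :=
    (B.continuous_arcVel j).continuousWithinAt
  rw [arcVel_s_succ] at h
  exact h.congr' (mem_of_superset (Ioo_mem_nhdsLT (B.s_lt_s_succ j)) fun u hu =>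
    (B.vel_eq_arcVel hu.1.le hu.2).symm)

theorem f_sub_h_le {t : ℝ} (j : ℕ) : f t - B.h ≤ B.L * |t - B.s j| := by
  have := B.lipschitz.dist_le_mul t (B.s j)
  rw [Real.dist_eq, Real.dist_eq, B.plate_eq] at this
  exact (le_abs_self _).trans this

/-- The arc rises above `h` at least like `(ν / 2) · min (t - s j, s (j + 1) - t)`, while the
plate rises at most like `L` times that distance. -/
theorem lt_pos {t : ℝ} {j : ℕ} (h₁ : B.s j < t) (h₂ : t < B.s (j + 1)) : f t < B.pos t := by
  rw [B.pos_eq_arc h₁.le h₂.le]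
  have hg := B.g_pos
  have hL := B.two_mul_L_lt.trans_le (B.c_le_ν j)
  have hfa := B.f_sub_h_le (t := t) j
  have hfb := B.f_sub_h_le (t := t) (j + 1)
  rw [abs_of_pos (sub_pos.2 h₁)] at hfa
  rw [abs_of_neg (sub_neg.2 h₂), neg_sub] at hfb
  have hsum : g * ((t - B.s j) + (B.s (j + 1) - t)) = 2 * B.ν j := by
    rw [B.s_succ]; field_simp; ring
  have harc : B.arc j t - B.h = g / 2 * (t - B.s j) * (B.s (j + 1) - t) := by
    rw [arc]; linear_combination -(t - B.s j) / 2 * hsum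
  rcases le_total (t - B.s j) (B.s (j + 1) - t) with hab | hab
  · nlinarith [mul_pos (sub_pos.2 h₁) (sub_pos.2 h₂)]
  · nlinarith [mul_pos (sub_pos.2 h₁) (sub_pos.2 h₂)]

theorem le_pos {t : ℝ} (ht : B.s 0 ≤ t) : f t ≤ B.pos t := by
  obtain ⟨h₁, h₂⟩ := B.flight_spec ht
  rcases h₁.lt_or_eq with h₁ | h₁
  · exact (B.lt_pos h₁ h₂).le
  · rw [← h₁, B.pos_s]

theorem pos_eq_iff {t : ℝ} (ht : B.s 0 ≤ t) : B.pos t = f t ↔ ∃ j, t = B.s j := by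
  refine ⟨fun he => ?_, fun ⟨j, hj⟩ => hj ▸ B.pos_s j⟩
  obtain ⟨h₁, h₂⟩ := B.flight_spec ht
  exact ⟨_, (h₁.lt_or_eq.resolve_left fun h₁ => (B.lt_pos h₁ h₂).ne' he).symm⟩

variable {B} {B' : Bouncer g f}

theorem pos_s_lt_pos {j : ℕ} (hs : ∀ l, B.s j ≠ B'.s l) (h0 : B'.s 0 ≤ B.s j) :
    B.pos (B.s j) < B'.pos (B.s j) := by
  rw [B.pos_s]
  refine (B'.le_pos h0).lt_of_ne fun h => ?_
  obtain ⟨l, hl⟩ := (B'.pos_eq_iff h0).1 h.symm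
  exact hs l hl

theorem ne_s_of_pos_eq_pos {t : ℝ} (hs : ∀ j l, B.s j ≠ B'.s l) (h0' : B'.s 0 ≤ t)
    (heq : B.pos t = B'.pos t) (j : ℕ) : t ≠ B.s j := by
  rintro rfl
  exact (pos_s_lt_pos (hs j) h0').ne heq

theorem vel_sub_vel (t : ℝ) :
    B.vel t - B'.vel t = g * (B.apex (B.flight t) - B'.apex (B'.flight t)) := by
  rw [vel, vel, arcVel_eq, arcVel_eq]; ring

/-- Neither bouncer is bouncing when they meet, so nearby both follow a single arc. -/
theorem eventually_pos_sub_pos_eq {t : ℝ} (hs : ∀ j l, B.s j ≠ B'.s l) (h0 : B.s 0 ≤ t)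
    (h0' : B'.s 0 ≤ t) (heq : B.pos t = B'.pos t) :
    ∀ᶠ u in 𝓝 t, B.pos u - B'.pos u = (B.vel t - B'.vel t) * (u - t) := by
  have hB := B.eventuallyEq_nhds (ne_s_of_pos_eq_pos hs h0' heq)
  have hB' := B'.eventuallyEq_nhds (ne_s_of_pos_eq_pos (fun l j => (hs j l).symm) h0 heq.symm)
  filter_upwards [hB.1, hB'.1] with u hu hu'
  have := B.arc_sub_arc B' (B.flight t) (B'.flight t) t u
  rw [hu, hu', vel_sub_vel]
  rw [pos, pos] at heq
  linear_combination this + heq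

theorem subsingleton_setOf_pos_eq_pos {j l : ℕ} (ha : B.apex j ≠ B'.apex l) :
    {t | t ∈ Icc (B.s j) (B.s (j + 1)) ∧ t ∈ Icc (B'.s l) (B'.s (l + 1)) ∧
      B.pos t = B'.pos t}.Subsingleton := by
  rintro t ⟨ht, ht', he⟩ u ⟨hu, hu', he'⟩
  rw [B.pos_eq_arc ht.1 ht.2, B'.pos_eq_arc ht'.1 ht'.2] at he
  rw [B.pos_eq_arc hu.1 hu.2, B'.pos_eq_arc hu'.1 hu'.2] at he'
  have h := B.arc_sub_arc B' j l t u
  rw [he, he', sub_self, sub_self, sub_zero] at h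
  have hne : g * (B.apex j - B'.apex l) ≠ 0 := mul_ne_zero B.g_pos.ne' (sub_ne_zero.2 ha)
  exact (sub_eq_zero.1 ((mul_eq_zero.1 h.symm).resolve_left hne)).symm

theorem reflection_of_eventuallyEq {v v' : ℝ → ℝ} {j : ℕ}
    (hv : v =ᶠ[𝓝 (B.s (j + 1))] B.vel) (hv' : v' =ᶠ[𝓝 (B.s (j + 1))] B'.vel)
    (hs : ∀ l, B.s (j + 1) ≠ B'.s l) :
    (∃ a b, Tendsto v (𝓝[<] (B.s (j + 1))) (𝓝 a) ∧ Tendsto v (𝓝[>] (B.s (j + 1))) (𝓝 b) ∧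
      b = -a + 2 * deriv f (B.s (j + 1))) ∧
    (∃ a, Tendsto v' (𝓝[<] (B.s (j + 1))) (𝓝 a) ∧ Tendsto v' (𝓝[>] (B.s (j + 1))) (𝓝 a)) := by
  have hc := (B'.continuousAt_vel hs).tendsto
  refine ⟨⟨_, _, (B.tendsto_vel_nhdsLT j).congr' (hv.symm.filter_mono nhdsWithin_le_nhds),
      (B.tendsto_vel_nhdsGT (j + 1)).congr' (hv.symm.filter_mono nhdsWithin_le_nhds),
      by rw [B.ν_succ]; ring⟩,
    _, (hc.mono_left nhdsWithin_le_nhds).congr' (hv'.symm.filter_mono nhdsWithin_le_nhds),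
    (hc.mono_left nhdsWithin_le_nhds).congr' (hv'.symm.filter_mono nhdsWithin_le_nhds)⟩

theorem exists_eq_add_one_of_s_pos (h0 : B.s 0 ≤ 0) {j : ℕ} (h : 0 < B.s j) : ∃ i, j = i + 1 :=
  Nat.exists_eq_add_one.2 (Nat.pos_of_ne_zero fun hj => (hj ▸ h).not_ge h0)

end Bouncer

/-- Distinct apex times make the two ghosts cross transversally whenever they meet. -/
structure GhostPair (g : ℝ) (f : ℝ → ℝ) where
  b₁ : Bouncer g f
  b₂ : Bouncer g f
  s₁_zero_le : b₁.s 0 ≤ 0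
  s₂_zero_le : b₂.s 0 ≤ 0
  s_ne : ∀ j l, b₁.s j ≠ b₂.s l
  apex_ne : ∀ j l, b₁.apex j ≠ b₂.apex l

namespace GhostPair

variable {g : ℝ} {f : ℝ → ℝ} (P : GhostPair g f)

def upper (t : ℝ) : ℝ := max (P.b₁.pos t) (P.b₂.pos t)

def lower (t : ℝ) : ℝ := min (P.b₁.pos t) (P.b₂.pos t)

def upperVel (t : ℝ) : ℝ := if P.b₂.pos t ≤ P.b₁.pos t then P.b₁.vel t else P.b₂.vel t

def lowerVel (t : ℝ) : ℝ := if P.b₂.pos t ≤ P.b₁.pos t then P.b₂.vel t else P.b₁.vel t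

def coll : Set ℝ := {t | 0 ≤ t ∧ (P.lower t = f t ∨ P.upper t = P.lower t)}

theorem s_ne' (l j : ℕ) : P.b₂.s l ≠ P.b₁.s j := (P.s_ne j l).symm

theorem pos₁_s_lt {j : ℕ} (h : 0 ≤ P.b₁.s j) : P.b₁.pos (P.b₁.s j) < P.b₂.pos (P.b₁.s j) :=
  Bouncer.pos_s_lt_pos (P.s_ne j) (P.s₂_zero_le.trans h)

theorem pos₂_s_lt {l : ℕ} (h : 0 ≤ P.b₂.s l) : P.b₂.pos (P.b₂.s l) < P.b₁.pos (P.b₂.s l) :=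
  Bouncer.pos_s_lt_pos (P.s_ne' l) (P.s₁_zero_le.trans h)

theorem lower_eq_iff {t : ℝ} (ht : 0 ≤ t) :
    P.lower t = f t ↔ (∃ j, t = P.b₁.s j) ∨ ∃ l, t = P.b₂.s l := by
  constructor
  · intro h
    rcases le_total (P.b₁.pos t) (P.b₂.pos t) with hle | hle
    · rw [lower, min_eq_left hle] at h
      exact .inl ((P.b₁.pos_eq_iff (P.s₁_zero_le.trans ht)).1 h)
    · rw [lower, min_eq_right hle] at h
      exact .inr ((P.b₂.pos_eq_iff (P.s₂_zero_le.trans ht)).1 h)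
  · rintro (⟨j, rfl⟩ | ⟨l, rfl⟩)
    · rw [lower, min_eq_left (P.pos₁_s_lt ht).le, P.b₁.pos_s]
    · rw [lower, min_eq_right (P.pos₂_s_lt ht).le, P.b₂.pos_s]

theorem upper_eq_lower_iff {t : ℝ} : P.upper t = P.lower t ↔ P.b₁.pos t = P.b₂.pos t :=
  max_eq_min_iff

theorem finite_coll_inter_Iic (x : ℝ) : (P.coll ∩ Iic x).Finite := by
  have hfin₁ := P.b₁.finite_setOf_s_le x
  have hfin₂ := P.b₂.finite_setOf_s_le x
  refine (((hfin₁.image P.b₁.s).union (hfin₂.image P.b₂.s)).union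
    (hfin₁.biUnion fun j _ => hfin₂.biUnion fun l _ =>
      (Bouncer.subsingleton_setOf_pos_eq_pos (P.apex_ne j l)).finite)).subset ?_
  rintro t ⟨⟨ht, hc | hc⟩, hx⟩
  · rcases (P.lower_eq_iff ht).1 hc with ⟨j, rfl⟩ | ⟨l, rfl⟩
    · exact .inl (.inl ⟨j, hx, rfl⟩)
    · exact .inl (.inr ⟨l, hx, rfl⟩)
  · obtain ⟨h₁, h₂⟩ := P.b₁.flight_spec (P.s₁_zero_le.trans ht)
    obtain ⟨h₁', h₂'⟩ := P.b₂.flight_spec (P.s₂_zero_le.trans ht)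
    refine .inr (mem_biUnion (h₁.trans hx) (mem_biUnion (h₁'.trans hx) ?_))
    exact ⟨⟨h₁, h₂.le⟩, ⟨h₁', h₂'.le⟩, P.upper_eq_lower_iff.1 hc⟩

theorem eventuallyEq_of_pos₂_lt {l : Filter ℝ} (h : ∀ᶠ u in l, P.b₂.pos u < P.b₁.pos u) :
    P.upper =ᶠ[l] P.b₁.pos ∧ P.lower =ᶠ[l] P.b₂.pos ∧
      P.upperVel =ᶠ[l] P.b₁.vel ∧ P.lowerVel =ᶠ[l] P.b₂.vel :=
  ⟨h.mono fun _ hu => max_eq_left hu.le, h.mono fun _ hu => min_eq_right hu.le,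
    h.mono fun _ hu => if_pos hu.le, h.mono fun _ hu => if_pos hu.le⟩

theorem eventuallyEq_of_pos₁_lt {l : Filter ℝ} (h : ∀ᶠ u in l, P.b₁.pos u < P.b₂.pos u) :
    P.upper =ᶠ[l] P.b₂.pos ∧ P.lower =ᶠ[l] P.b₁.pos ∧
      P.upperVel =ᶠ[l] P.b₂.vel ∧ P.lowerVel =ᶠ[l] P.b₁.vel :=
  ⟨h.mono fun _ hu => max_eq_right hu.le, h.mono fun _ hu => min_eq_left hu.le,
    h.mono fun _ hu => if_neg hu.not_ge, h.mono fun _ hu => if_neg hu.not_ge⟩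

theorem eventually_pos₁_lt {j : ℕ} (h : 0 ≤ P.b₁.s j) :
    ∀ᶠ u in 𝓝 (P.b₁.s j), P.b₁.pos u < P.b₂.pos u :=
  (isOpen_lt P.b₁.continuous_pos P.b₂.continuous_pos).mem_nhds (P.pos₁_s_lt h)

theorem eventually_pos₂_lt {l : ℕ} (h : 0 ≤ P.b₂.s l) :
    ∀ᶠ u in 𝓝 (P.b₂.s l), P.b₂.pos u < P.b₁.pos u :=
  (isOpen_lt P.b₂.continuous_pos P.b₁.continuous_pos).mem_nhds (P.pos₂_s_lt h)

theorem tendsto_lowerVel_s₁ {j : ℕ} (h : 0 ≤ P.b₁.s j) :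
    Tendsto P.lowerVel (𝓝[>] (P.b₁.s j)) (𝓝 (P.b₁.ν j)) :=
  (P.b₁.tendsto_vel_nhdsGT j).congr'
    ((P.eventuallyEq_of_pos₁_lt (P.eventually_pos₁_lt h)).2.2.2.symm.filter_mono
      nhdsWithin_le_nhds)

theorem tendsto_lowerVel_s₂ {l : ℕ} (h : 0 ≤ P.b₂.s l) :
    Tendsto P.lowerVel (𝓝[>] (P.b₂.s l)) (𝓝 (P.b₂.ν l)) :=
  (P.b₂.tendsto_vel_nhdsGT l).congr'
    ((P.eventuallyEq_of_pos₂_lt (P.eventually_pos₂_lt h)).2.2.2.symm.filter_mono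
      nhdsWithin_le_nhds)

theorem reflection {t : ℝ} (ht : 0 < t) (hc : P.lower t = f t) :
    (∃ a b, Tendsto P.lowerVel (𝓝[<] t) (𝓝 a) ∧ Tendsto P.lowerVel (𝓝[>] t) (𝓝 b) ∧
      b = -a + 2 * deriv f t) ∧
    (∃ a, Tendsto P.upperVel (𝓝[<] t) (𝓝 a) ∧ Tendsto P.upperVel (𝓝[>] t) (𝓝 a)) := by
  rcases (P.lower_eq_iff ht.le).1 hc with ⟨j, rfl⟩ | ⟨l, rfl⟩
  · obtain ⟨j, rfl⟩ := Bouncer.exists_eq_add_one_of_s_pos P.s₁_zero_le ht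
    obtain ⟨-, -, hup, hlow⟩ := P.eventuallyEq_of_pos₁_lt (P.eventually_pos₁_lt ht.le)
    exact Bouncer.reflection_of_eventuallyEq hlow hup (P.s_ne _)
  · obtain ⟨l, rfl⟩ := Bouncer.exists_eq_add_one_of_s_pos P.s₂_zero_le ht
    obtain ⟨-, -, hup, hlow⟩ := P.eventuallyEq_of_pos₂_lt (P.eventually_pos₂_lt ht.le)
    exact Bouncer.reflection_of_eventuallyEq hlow hup (P.s_ne' _)

theorem tendsto_of_pos_eq_pos {t : ℝ} (ht : 0 ≤ t) (heq : P.b₁.pos t = P.b₂.pos t) :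
    Tendsto P.upperVel (𝓝[<] t) (𝓝 (min (P.b₁.vel t) (P.b₂.vel t))) ∧
    Tendsto P.lowerVel (𝓝[<] t) (𝓝 (max (P.b₁.vel t) (P.b₂.vel t))) ∧
    Tendsto P.upperVel (𝓝[>] t) (𝓝 (max (P.b₁.vel t) (P.b₂.vel t))) ∧
    Tendsto P.lowerVel (𝓝[>] t) (𝓝 (min (P.b₁.vel t) (P.b₂.vel t))) := by
  have h₁ := P.s₁_zero_le.trans ht
  have h₂ := P.s₂_zero_le.trans ht
  have hgap := Bouncer.eventually_pos_sub_pos_eq P.s_ne h₁ h₂ heq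
  have hc₁ := (P.b₁.continuousAt_vel (Bouncer.ne_s_of_pos_eq_pos P.s_ne h₂ heq)).tendsto
  have hc₂ := (P.b₂.continuousAt_vel (Bouncer.ne_s_of_pos_eq_pos P.s_ne' h₁ heq.symm)).tendsto
  have hR : ∀ᶠ u in 𝓝[>] t, _ ∧ t < u :=
    (hgap.filter_mono nhdsWithin_le_nhds).and self_mem_nhdsWithin
  have hL : ∀ᶠ u in 𝓝[<] t, _ ∧ u < t :=
    (hgap.filter_mono nhdsWithin_le_nhds).and self_mem_nhdsWithin
  have hw : P.b₁.vel t ≠ P.b₂.vel t := by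
    rw [← sub_ne_zero, Bouncer.vel_sub_vel]
    exact mul_ne_zero P.b₁.g_pos.ne' (sub_ne_zero.2 (P.apex_ne _ _))
  rcases hw.lt_or_gt with hw | hw
  · have hw' := sub_neg.2 hw
    obtain ⟨-, -, hupL, hlowL⟩ := P.eventuallyEq_of_pos₂_lt
      (hL.mono fun u ⟨hu, hut⟩ => sub_pos.1 (hu ▸ mul_pos_of_neg_of_neg hw' (sub_neg.2 hut)))
    obtain ⟨-, -, hupR, hlowR⟩ := P.eventuallyEq_of_pos₁_lt
      (hR.mono fun u ⟨hu, hut⟩ => sub_neg.1 (hu ▸ mul_neg_of_neg_of_pos hw' (sub_pos.2 hut)))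
    rw [min_eq_left hw.le, max_eq_right hw.le]
    exact ⟨(hc₁.mono_left nhdsWithin_le_nhds).congr' hupL.symm,
      (hc₂.mono_left nhdsWithin_le_nhds).congr' hlowL.symm,
      (hc₂.mono_left nhdsWithin_le_nhds).congr' hupR.symm,
      (hc₁.mono_left nhdsWithin_le_nhds).congr' hlowR.symm⟩
  · have hw' := sub_pos.2 hw
    obtain ⟨-, -, hupL, hlowL⟩ := P.eventuallyEq_of_pos₁_lt
      (hL.mono fun u ⟨hu, hut⟩ => sub_neg.1 (hu ▸ mul_neg_of_pos_of_neg hw' (sub_neg.2 hut)))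
    obtain ⟨-, -, hupR, hlowR⟩ := P.eventuallyEq_of_pos₂_lt
      (hR.mono fun u ⟨hu, hut⟩ => sub_pos.1 (hu ▸ mul_pos hw' (sub_pos.2 hut)))
    rw [min_eq_right hw.le, max_eq_left hw.le]
    exact ⟨(hc₂.mono_left nhdsWithin_le_nhds).congr' hupL.symm,
      (hc₁.mono_left nhdsWithin_le_nhds).congr' hlowL.symm,
      (hc₁.mono_left nhdsWithin_le_nhds).congr' hupR.symm,
      (hc₂.mono_left nhdsWithin_le_nhds).congr' hlowR.symm⟩

theorem hasDerivAt_of_notMem_coll {t : ℝ} (ht : 0 ≤ t) (hc : t ∉ P.coll) :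
    (HasDerivAt P.upper (P.upperVel t) t ∧ HasDerivAt P.upperVel (-g) t) ∧
    (HasDerivAt P.lower (P.lowerVel t) t ∧ HasDerivAt P.lowerVel (-g) t) := by
  have hn₁ : ∀ j, t ≠ P.b₁.s j := fun j hj =>
    hc ⟨ht, .inl ((P.lower_eq_iff ht).2 (.inl ⟨j, hj⟩))⟩
  have hn₂ : ∀ l, t ≠ P.b₂.s l := fun l hl =>
    hc ⟨ht, .inl ((P.lower_eq_iff ht).2 (.inr ⟨l, hl⟩))⟩
  have hne : P.b₁.pos t ≠ P.b₂.pos t := fun h => hc ⟨ht, .inr (P.upper_eq_lower_iff.2 h)⟩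
  rcases hne.lt_or_gt with hlt | hlt
  · obtain ⟨hu, hl, hvu, hvl⟩ := P.eventuallyEq_of_pos₁_lt
      ((isOpen_lt P.b₁.continuous_pos P.b₂.continuous_pos).mem_nhds hlt)
    rw [hvu.eq_of_nhds, hvl.eq_of_nhds]
    exact ⟨⟨(P.b₂.hasDerivAt_pos hn₂).congr_of_eventuallyEq hu,
        (P.b₂.hasDerivAt_vel hn₂).congr_of_eventuallyEq hvu⟩,
      (P.b₁.hasDerivAt_pos hn₁).congr_of_eventuallyEq hl,
        (P.b₁.hasDerivAt_vel hn₁).congr_of_eventuallyEq hvl⟩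
  · obtain ⟨hu, hl, hvu, hvl⟩ := P.eventuallyEq_of_pos₂_lt
      ((isOpen_lt P.b₂.continuous_pos P.b₁.continuous_pos).mem_nhds hlt)
    rw [hvu.eq_of_nhds, hvl.eq_of_nhds]
    exact ⟨⟨(P.b₁.hasDerivAt_pos hn₁).congr_of_eventuallyEq hu,
        (P.b₁.hasDerivAt_vel hn₁).congr_of_eventuallyEq hvu⟩,
      (P.b₂.hasDerivAt_pos hn₂).congr_of_eventuallyEq hl,
        (P.b₂.hasDerivAt_vel hn₂).congr_of_eventuallyEq hvl⟩

theorem not_lower_eq_and_upper_eq_lower {t : ℝ} (ht : 0 ≤ t) :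
    ¬(P.lower t = f t ∧ P.upper t = P.lower t) := by
  rintro ⟨hc, he⟩
  rw [P.upper_eq_lower_iff] at he
  rcases (P.lower_eq_iff ht).1 hc with ⟨j, rfl⟩ | ⟨l, rfl⟩
  · exact (P.pos₁_s_lt ht).ne he
  · exact (P.pos₂_s_lt ht).ne he.symm

def toMotion (m : ℝ) : BouncingBallMotion g f m m where
  x₁ := P.upper
  x₂ := P.lower
  v₁ := P.upperVel
  v₂ := P.lowerVel
  coll := P.coll
  cont₁ := (P.b₁.continuous_pos.max P.b₂.continuous_pos).continuousOn
  cont₂ := (P.b₁.continuous_pos.min P.b₂.continuous_pos).continuousOn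
  order t ht :=
    ⟨le_min (P.b₁.le_pos (P.s₁_zero_le.trans ht)) (P.b₂.le_pos (P.s₂_zero_le.trans ht)),
      min_le_max⟩
  coll_sub _ ht := ht.1
  coll_discrete := exists_pos_forall_abs_sub_lt_imp_eq P.finite_coll_inter_Iic
  freefall₁ t ht := (P.hasDerivAt_of_notMem_coll ht.1 ht.2).1
  freefall₂ t ht := (P.hasDerivAt_of_notMem_coll ht.1 ht.2).2
  contact_mem_coll _ ht hc := ⟨ht, hc⟩
  coll_is_contact _ ht := ht.2
  no_triple _ ht := P.not_lower_eq_and_upper_eq_lower ht.1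
  plate_law _ _ ht hc := P.reflection ht hc
  ball_law t ht _ hc := by
    obtain ⟨h₁, h₂, h₃, h₄⟩ := P.tendsto_of_pos_eq_pos ht.1 (P.upper_eq_lower_iff.1 hc)
    exact ⟨_, _, _, _, h₁, h₂, h₃, h₄, by simp, by simp⟩

theorem lowerVel_s₁ {j : ℕ} (h : 0 ≤ P.b₁.s j) : P.lowerVel (P.b₁.s j) = P.b₁.ν j := by
  rw [lowerVel, if_neg (P.pos₁_s_lt h).not_ge, P.b₁.vel_s]

theorem lowerVel_s₂ {l : ℕ} (h : 0 ≤ P.b₂.s l) : P.lowerVel (P.b₂.s l) = P.b₂.ν l := by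
  rw [lowerVel, if_pos (P.pos₂_s_lt h).le, P.b₂.vel_s]

theorem tendsto_lowerVel_of_lower_eq {t : ℝ} (ht : 0 ≤ t) (hc : P.lower t = f t) :
    Tendsto P.lowerVel (𝓝[>] t) (𝓝 (P.lowerVel t)) := by
  rcases (P.lower_eq_iff ht).1 hc with ⟨j, rfl⟩ | ⟨l, rfl⟩
  · rw [P.lowerVel_s₁ ht]; exact P.tendsto_lowerVel_s₁ ht
  · rw [P.lowerVel_s₂ ht]; exact P.tendsto_lowerVel_s₂ ht

section Meetings

variable {w : ℝ} (hw : ∀ l, P.b₂.ν l ≤ w) {j : ℕ} (h0 : 0 ≤ P.b₁.s j)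
  (hj : P.b₂.h + w ^ 2 / (2 * g) < P.b₁.pos (P.b₁.apex j))
include hw h0 hj

theorem exists_meeting_rising :
    ∃ t ∈ Ioo (P.b₁.s j) (P.b₁.apex j), P.b₁.pos t = P.b₂.pos t ∧
      P.b₁.ν j ^ 2 - 2 * g * (P.b₂.h + w ^ 2 / (2 * g) - P.b₁.h) ≤
        |max (P.b₁.vel t) (P.b₂.vel t)| ^ 2 := by
  obtain ⟨t, ⟨ht₁, ht₂⟩, ht⟩ := intermediate_value_Ioo (P.b₁.s_lt_apex j).le
    (P.b₁.continuous_pos.sub P.b₂.continuous_pos).continuousOn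
    ⟨sub_neg.2 (P.pos₁_s_lt h0), sub_pos.2 ((P.b₂.pos_le hw _).trans_lt hj)⟩
  have heq : P.b₁.pos t = P.b₂.pos t := sub_eq_zero.1 ht
  have ht₃ := ht₂.trans (P.b₁.apex_lt_s_succ j)
  have hv : 0 < P.b₁.vel t := by
    rw [P.b₁.vel_eq_arcVel ht₁.le ht₃, Bouncer.arcVel_eq]
    exact mul_pos P.b₁.g_pos (sub_pos.2 ht₂)
  have hsq := P.b₁.vel_sq t
  rw [P.b₁.flight_eq ht₁.le ht₃, heq] at hsq
  have := P.b₂.pos_le hw t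
  refine ⟨t, ⟨ht₁, ht₂⟩, heq, ?_⟩
  calc P.b₁.ν j ^ 2 - 2 * g * (P.b₂.h + w ^ 2 / (2 * g) - P.b₁.h) ≤ P.b₁.vel t ^ 2 := by
        nlinarith [P.b₁.g_pos]
    _ ≤ |max (P.b₁.vel t) (P.b₂.vel t)| ^ 2 :=
        pow_le_pow_left₀ hv.le ((le_max_left _ _).trans (le_abs_self _)) 2

theorem exists_meeting_falling :
    ∃ t ∈ Ioo (P.b₁.apex j) (P.b₁.s (j + 1)), P.b₁.pos t = P.b₂.pos t ∧
      |max (P.b₁.vel t) (P.b₂.vel t)| ≤ w := by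
  obtain ⟨t, ⟨ht₁, ht₂⟩, ht⟩ := intermediate_value_Ioo' (P.b₁.apex_lt_s_succ j).le
    (P.b₁.continuous_pos.sub P.b₂.continuous_pos).continuousOn
    ⟨sub_neg.2 (P.pos₁_s_lt (h0.trans (P.b₁.s_lt_s_succ j).le)),
      sub_pos.2 ((P.b₂.pos_le hw _).trans_lt hj)⟩
  have ht₀ := (P.b₁.s_lt_apex j).trans ht₁
  have hv : P.b₁.vel t < 0 := by
    rw [P.b₁.vel_eq_arcVel ht₀.le ht₂, Bouncer.arcVel_eq]
    exact mul_neg_of_pos_of_neg P.b₁.g_pos (sub_neg.2 ht₁)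
  refine ⟨t, ⟨ht₁, ht₂⟩, sub_eq_zero.1 ht, (abs_max_le_abs_of_neg hv).trans ?_⟩
  exact (P.b₂.abs_vel_le (P.s₂_zero_le.trans (h0.trans ht₀.le))).trans (hw _)

end Meetings

theorem exists_strictMono_range_eq_of_subset {S : Set ℝ} (hS : S ⊆ P.coll)
    (hunb : ∀ x, ∃ t ∈ S, x < t) : ∃ σ : ℕ → ℝ, StrictMono σ ∧ range σ = S :=
  exists_strictMono_range_eq
    (fun x => (P.finite_coll_inter_Iic x).subset (inter_subset_inter_left _ hS))
    (not_bddAbove_iff.2 fun x => hunb x)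

section Unbounded

variable (hν : Tendsto P.b₁.ν atTop atTop) {w : ℝ} (hw : ∀ l, P.b₂.ν l ≤ w)
include hν

theorem exists_s₁_gt_ν₁_sq_gt (x M : ℝ) : ∃ j, x < P.b₁.s j ∧ 0 ≤ P.b₁.s j ∧ M < P.b₁.ν j ^ 2 := by
  obtain ⟨j, hs, hν⟩ := ((P.b₁.tendsto_s.eventually_gt_atTop (max x 0)).and
    (((tendsto_pow_atTop two_ne_zero).comp hν).eventually_gt_atTop M)).exists
  exact ⟨j, (le_max_left _ _).trans_lt hs, (le_max_right _ _).trans hs.le, hν⟩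

theorem exists_bounce₁_fast (x C : ℝ) :
    ∃ t ∈ {t | t ∈ P.coll ∧ P.lower t = f t}, x < t ∧ C < |P.lowerVel t| := by
  obtain ⟨j, hx, h0, hj⟩ := P.exists_s₁_gt_ν₁_sq_gt hν x (C ^ 2)
  have hc : P.lower (P.b₁.s j) = f (P.b₁.s j) := (P.lower_eq_iff h0).2 (.inl ⟨j, rfl⟩)
  refine ⟨_, ⟨⟨h0, .inl hc⟩, hc⟩, hx, ?_⟩
  rw [P.lowerVel_s₁ h0]
  exact (le_abs_self C).trans_lt (sq_lt_sq.1 hj)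

include hw

theorem exists_meeting_fast (x C : ℝ) :
    ∃ t ∈ {t | t ∈ P.coll ∧ P.upper t = P.lower t}, x < t ∧
      C < |max (P.b₁.vel t) (P.b₂.vel t)| := by
  obtain ⟨j, hx, h0, hj⟩ :=
    P.exists_s₁_gt_ν₁_sq_gt hν x (C ^ 2 + 2 * g * (P.b₂.h + w ^ 2 / (2 * g) - P.b₁.h))
  obtain ⟨t, ht, heq, hv⟩ :=
    P.exists_meeting_rising hw h0 (P.b₁.lt_pos_apex (by linarith [sq_nonneg C]))
  have hc : P.upper t = P.lower t := P.upper_eq_lower_iff.2 heq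
  refine ⟨t, ⟨⟨h0.trans ht.1.le, .inr hc⟩, hc⟩, hx.trans ht.1, ?_⟩
  have := sq_abs (max (P.b₁.vel t) (P.b₂.vel t))
  exact (le_abs_self C).trans_lt (sq_lt_sq.1 (by linarith))

theorem exists_meeting_slow (x : ℝ) :
    ∃ t ∈ {t | t ∈ P.coll ∧ P.upper t = P.lower t}, x < t ∧
      |max (P.b₁.vel t) (P.b₂.vel t)| ≤ w := by
  obtain ⟨j, hx, h0, hj⟩ :=
    P.exists_s₁_gt_ν₁_sq_gt hν x (2 * g * (P.b₂.h + w ^ 2 / (2 * g) - P.b₁.h))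
  obtain ⟨t, ht, heq, hv⟩ := P.exists_meeting_falling hw h0 (P.b₁.lt_pos_apex hj)
  have hc : P.upper t = P.lower t := P.upper_eq_lower_iff.2 heq
  have ht₀ := (P.b₁.s_lt_apex j).trans ht.1
  exact ⟨t, ⟨⟨h0.trans ht₀.le, .inr hc⟩, hc⟩, hx.trans ht₀, hv⟩

end Unbounded

theorem exists_bounce₂_slow {w : ℝ} (hw : ∀ l, P.b₂.ν l ≤ w) (x : ℝ) :
    ∃ t ∈ {t | t ∈ P.coll ∧ P.lower t = f t}, x < t ∧ |P.lowerVel t| ≤ w := by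
  obtain ⟨l, hl⟩ := (P.b₂.tendsto_s.eventually_gt_atTop (max x 0)).exists
  have h0 : 0 ≤ P.b₂.s l := (le_max_right _ _).trans hl.le
  have hc : P.lower (P.b₂.s l) = f (P.b₂.s l) := (P.lower_eq_iff h0).2 (.inr ⟨l, rfl⟩)
  refine ⟨_, ⟨⟨h0, .inl hc⟩, hc⟩, (le_max_left _ _).trans_lt hl, ?_⟩
  rw [P.lowerVel_s₂ h0, abs_of_pos (P.b₂.ν_pos l)]
  exact hw l

theorem exists_collision_enumeration (hν : Tendsto P.b₁.ν atTop atTop) {w : ℝ}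
    (hw : ∀ l, P.b₂.ν l ≤ w) :
    ∃ p q V₁ V₂ : ℕ → ℝ,
      StrictMono p ∧ StrictMono q ∧
      (∀ i : ℕ, p i ∈ P.coll ∧ P.lower (p i) = f (p i)) ∧
      (∀ i : ℕ, q i ∈ P.coll ∧ P.upper (q i) = P.lower (q i)) ∧
      (∀ t ∈ P.coll, P.lower t = f t → ∃ i : ℕ, p i = t) ∧
      (∀ t ∈ P.coll, P.upper t = P.lower t → ∃ i : ℕ, q i = t) ∧
      (∀ i : ℕ, Tendsto P.lowerVel (𝓝[>] (p i)) (𝓝 (V₂ i))) ∧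
      (∀ i : ℕ, Tendsto P.upperVel (𝓝[>] (q i)) (𝓝 (V₁ i))) ∧
      (∀ C : ℝ, ∃ᶠ i in atTop, C < |V₁ i|) ∧
      (∀ C : ℝ, ∃ᶠ i in atTop, C < |V₂ i|) ∧
      (∃ C : ℝ, ∃ᶠ i in atTop, |V₁ i| ≤ C) ∧
      (∃ C : ℝ, ∃ᶠ i in atTop, |V₂ i| ≤ C) := by
  obtain ⟨p, hp, hpr⟩ := P.exists_strictMono_range_eq_of_subset (fun _ ht => ht.1)
    fun x => (P.exists_bounce₂_slow hw x).imp fun _ ⟨ht, hxt, _⟩ => ⟨ht, hxt⟩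
  obtain ⟨q, hq, hqr⟩ := P.exists_strictMono_range_eq_of_subset (fun _ ht => ht.1)
    fun x => (P.exists_meeting_slow hν hw x).imp fun _ ⟨ht, hxt, _⟩ => ⟨ht, hxt⟩
  have hpm (i : ℕ) : p i ∈ P.coll ∧ P.lower (p i) = f (p i) := hpr.le (mem_range_self i)
  have hqm (i : ℕ) : q i ∈ P.coll ∧ P.upper (q i) = P.lower (q i) := hqr.le (mem_range_self i)
  refine ⟨p, q, fun i => max (P.b₁.vel (q i)) (P.b₂.vel (q i)), fun i => P.lowerVel (p i),
    hp, hq, hpm, hqm, fun t ht hc => hpr.ge ⟨ht, hc⟩, fun t ht hc => hqr.ge ⟨ht, hc⟩,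
    fun i => P.tendsto_lowerVel_of_lower_eq (hpm i).1.1 (hpm i).2,
    fun i => (P.tendsto_of_pos_eq_pos (hqm i).1.1 (P.upper_eq_lower_iff.1 (hqm i).2)).2.2.1,
    fun C => hq.frequently_atTop (hqr ▸ P.exists_meeting_fast hν hw · C),
    fun C => hp.frequently_atTop (hpr ▸ P.exists_bounce₁_fast hν · C),
    ⟨w, hq.frequently_atTop (hqr ▸ P.exists_meeting_slow hν hw ·)⟩,
    ⟨w, hp.frequently_atTop (hpr ▸ P.exists_bounce₂_slow hw ·)⟩⟩

end GhostPair

theorem add_int_mul_ne_add_int_mul {t u T : ℝ} (hu : u ∈ Ioo t (t + T)) (i j : ℤ) :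
    t + i * T ≠ u + j * T := by
  intro h
  have hT : 0 < T := by linarith [hu.1, hu.2]
  have hij : ((i - j : ℤ) : ℝ) * T = u - t := by push_cast; linarith
  have h₁ : (0 : ℤ) < i - j := by
    exact_mod_cast pos_of_mul_pos_left (hij ▸ sub_pos.2 hu.1) hT.le
  have h₂ : i - j < (1 : ℤ) := by
    exact_mod_cast (mul_lt_iff_lt_one_left hT).1 (hij ▸ sub_lt_iff_lt_add'.2 hu.2)
  omega

namespace Bouncer

variable {g T : ℝ} {f : ℝ → ℝ} {L : ℝ≥0}

/-- Flight `j` lasts `2 (m + k j)` periods and peaks halfway, so all bounces and apexes happen at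
times `≡ τ (mod T)`, where `f' = k T g / 2` adds exactly `g T k` to the speed. -/
def periodic (hg : 0 < g) (hT : 0 < T) (hf : Function.Periodic f T) (hL : LipschitzWith L f)
    (τ : ℝ) (m k : ℕ) (hm : 2 * (L : ℝ) < g * T * m) (hτ : deriv f τ = k * T * g / 2) :
    Bouncer g f where
  s j := τ + (2 * ∑ i ∈ Finset.range j, (m + k * i) : ℕ) * T
  ν j := g * T * (m + k * j)
  h := f τ
  L := L
  c := g * T * m
  g_pos := hg
  lipschitz := hL
  plate_eq _ := hf.nat_mul _ τ
  s_succ j := by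
    push_cast [Finset.sum_range_succ]
    field_simp
    ring
  two_mul_L_lt := hm
  c_le_ν j := by
    have : (m : ℝ) ≤ m + k * j := le_add_of_nonneg_right (by positivity)
    exact mul_le_mul_of_nonneg_left this (mul_nonneg hg.le hT.le)
  ν_succ j := by
    rw [(hf.deriv.nat_mul _) τ, hτ]
    push_cast
    ring

variable {hg : 0 < g} {hT : 0 < T} {hf : Function.Periodic f T} {hL : LipschitzWith L f}
  {τ : ℝ} {m k : ℕ} {hm : 2 * (L : ℝ) < g * T * m} {hτ : deriv f τ = k * T * g / 2}

theorem periodic_s_zero : (periodic hg hT hf hL τ m k hm hτ).s 0 = τ := by simp [periodic]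

theorem exists_periodic_s_eq (j : ℕ) :
    ∃ n : ℕ, (periodic hg hT hf hL τ m k hm hτ).s j = τ + n * T := ⟨_, rfl⟩

theorem exists_periodic_apex_eq (j : ℕ) :
    ∃ n : ℕ, (periodic hg hT hf hL τ m k hm hτ).apex j = τ + n * T := by
  refine ⟨2 * ∑ i ∈ Finset.range j, (m + k * i) + (m + k * j), ?_⟩
  simp only [apex, periodic]
  push_cast
  field_simp
  ring

end Bouncer

/-- `b₁` bounces where `f' = K T g / 2`, `b₂` at a critical point of `f` less than a period
later. -/
theorem exists_ghostPair {g T : ℝ} {f : ℝ → ℝ} (hg : 0 < g) (hT : 0 < T) (hf : ContDiff ℝ 1 f)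
    (hper : Function.Periodic f T) {t₀ : ℝ} {K : ℕ} (hK : 0 < K)
    (ht₀ : deriv f t₀ = K * T * g / 2) :
    ∃ P : GhostPair g f, Tendsto P.b₁.ν atTop atTop ∧ ∃ w, ∀ l, P.b₂.ν l ≤ w := by
  obtain ⟨L, hL⟩ := hper.exists_lipschitzWith hf hT.ne'
  obtain ⟨u₀, hu₀, hu₀'⟩ := exists_deriv_eq_zero (lt_add_of_pos_right t₀ hT)
    hf.continuous.continuousOn (hper t₀).symm
  obtain ⟨m, hm⟩ := exists_nat_gt (2 * L / (g * T))
  have hm : 2 * (L : ℝ) < g * T * m := (div_lt_iff₀' (by positivity)).1 hm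
  obtain ⟨a, ha⟩ := exists_nat_ge (t₀ / T)
  obtain ⟨b, hb⟩ := exists_nat_ge (u₀ / T)
  have hτ₁ : deriv f (t₀ - a * T) = K * T * g / 2 := by rw [hper.deriv.sub_nat_mul_eq, ht₀]
  have hτ₂ : deriv f (u₀ - b * T) = (0 : ℕ) * T * g / 2 := by
    rw [hper.deriv.sub_nat_mul_eq, hu₀']; simp
  set b₁ := Bouncer.periodic hg hT hper hL _ m K hm hτ₁
  set b₂ := Bouncer.periodic hg hT hper hL _ m 0 hm hτ₂
  have hphase (n n' : ℕ) : t₀ - a * T + n * T ≠ u₀ - b * T + n' * T := fun h =>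
    add_int_mul_ne_add_int_mul hu₀ (n - a) (n' - b) (by push_cast; linarith)
  refine ⟨⟨b₁, b₂, ?_, ?_, fun j l => ?_, fun j l => ?_⟩, ?_, g * T * m, fun l => ?_⟩
  · rw [Bouncer.periodic_s_zero, sub_nonpos]; exact (div_le_iff₀ hT).1 ha
  · rw [Bouncer.periodic_s_zero, sub_nonpos]; exact (div_le_iff₀ hT).1 hb
  · obtain ⟨n, hn⟩ := Bouncer.exists_periodic_s_eq (m := m) (k := K) (hτ := hτ₁) j
    obtain ⟨n', hn'⟩ := Bouncer.exists_periodic_s_eq (m := m) (k := 0) (hτ := hτ₂) l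
    rw [hn, hn']; exact hphase n n'
  · obtain ⟨n, hn⟩ := Bouncer.exists_periodic_apex_eq (m := m) (k := K) (hτ := hτ₁) j
    obtain ⟨n', hn'⟩ := Bouncer.exists_periodic_apex_eq (m := m) (k := 0) (hτ := hτ₂) l
    rw [hn, hn']; exact hphase n n'
  · exact (tendsto_atTop_add_const_left _ _
      (tendsto_natCast_atTop_atTop.const_mul_atTop (Nat.cast_pos.2 hK)))
      |>.const_mul_atTop (by positivity)
  · simp [b₂, Bouncer.periodic]

theorem equal_masses_limsup_infinite_liminf_finite_general
    (g T m : ℝ) (hg : 0 < g) (hT : 0 < T)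
    (f : ℝ → ℝ) (hf : ContDiff ℝ 1 f) (hfper : Function.Periodic f T)
    (hclass : ∃ t₀ : ℝ, ∃ K : ℕ, 0 < K ∧ deriv f t₀ = K * T * g / 2) :
    ∃ M : BouncingBallMotion g f m m, ∃ p q V₁ V₂ : ℕ → ℝ,
      StrictMono p ∧ StrictMono q ∧
      (∀ i : ℕ, p i ∈ M.coll ∧ M.x₂ (p i) = f (p i)) ∧
      (∀ i : ℕ, q i ∈ M.coll ∧ M.x₁ (q i) = M.x₂ (q i)) ∧
      (∀ t ∈ M.coll, M.x₂ t = f t → ∃ i : ℕ, p i = t) ∧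
      (∀ t ∈ M.coll, M.x₁ t = M.x₂ t → ∃ i : ℕ, q i = t) ∧
      (∀ i : ℕ, Tendsto M.v₂ (𝓝[>] (p i)) (𝓝 (V₂ i))) ∧
      (∀ i : ℕ, Tendsto M.v₁ (𝓝[>] (q i)) (𝓝 (V₁ i))) ∧
      (∀ C : ℝ, ∃ᶠ i in atTop, C < |V₁ i|) ∧
      (∀ C : ℝ, ∃ᶠ i in atTop, C < |V₂ i|) ∧
      (∃ C : ℝ, ∃ᶠ i in atTop, |V₁ i| ≤ C) ∧
      (∃ C : ℝ, ∃ᶠ i in atTop, |V₂ i| ≤ C) := by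
  obtain ⟨t₀, K, hK, ht₀⟩ := hclass
  obtain ⟨P, hν, w, hw⟩ := exists_ghostPair hg hT hf hfper hK ht₀
  exact ⟨P.toMotion m, P.exists_collision_enumeration hν hw⟩

/-- Theorem 3,2(b): for two balls of equal positive mass above a plate whose
motion `f` belongs to the class `𝒞`, there is a motion in which the
post-collision speeds of both balls have `limsup = ∞` while both `liminf`s are
finite (i.e. `max(liminf |v⁽¹⁾ᵢ|, liminf |v⁽²⁾ᵢ|) < ∞`).  Here `p i` enumerates
the collisions of `P₂` with the plate (`V₂ i` the velocity just afterwards)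
and `q i` enumerates the collisions of `P₁` with `P₂` (`V₁ i` the velocity of
`P₁` just afterwards). -/
theorem equal_masses_limsup_infinite_liminf_finite
    (g T m : ℝ) (hg : 0 < g) (hT : 0 < T) (hm : 0 < m)
    (f : ℝ → ℝ) (hf : ContDiff ℝ 1 f) (hfper : Function.Periodic f T)
    (hclass : ∃ t₀ : ℝ, ∃ K : ℕ, 0 < K ∧ deriv f t₀ = K * T * g / 2) :
    ∃ M : BouncingBallMotion g f m m, ∃ p q V₁ V₂ : ℕ → ℝ,
      StrictMono p ∧ StrictMono q ∧
      (∀ i : ℕ, p i ∈ M.coll ∧ M.x₂ (p i) = f (p i)) ∧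
      (∀ i : ℕ, q i ∈ M.coll ∧ M.x₁ (q i) = M.x₂ (q i)) ∧
      (∀ t ∈ M.coll, M.x₂ t = f t → ∃ i : ℕ, p i = t) ∧
      (∀ t ∈ M.coll, M.x₁ t = M.x₂ t → ∃ i : ℕ, q i = t) ∧
      (∀ i : ℕ, Tendsto M.v₂ (𝓝[>] (p i)) (𝓝 (V₂ i))) ∧
      (∀ i : ℕ, Tendsto M.v₁ (𝓝[>] (q i)) (𝓝 (V₁ i))) ∧
      (∀ C : ℝ, ∃ᶠ i in atTop, C < |V₁ i|) ∧
      (∀ C : ℝ, ∃ᶠ i in atTop, C < |V₂ i|) ∧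
      (∃ C : ℝ, ∃ᶠ i in atTop, |V₁ i| ≤ C) ∧
      (∃ C : ℝ, ∃ᶠ i in atTop, |V₂ i| ≤ C) :=
  equal_masses_limsup_infinite_liminf_finite_general g T m hg hT f hf hfper hclass
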